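/- arXiv:2104.14213 — 4 statements merged into one kernel-verified Lean document; each statement's English description precedes it below -/
import Mathlib

section
/- Let α ∈ ℝ^m be a vector of non-negative reals summing to 1. Then for every n ≥ 1 there exists a vector s ∈ ℕ^m of natural numbers with ∑ s_i = n and |s_i/n − α_i| < 1/n for every i. -/
/-!
Round every coordinate of `n • α` down. The deficit `n - ∑ ⌊n αᵢ⌋` is the sum of the
fractional parts, so it is at most the number of non-integral coordinates; rounding up that
many of them restores the sum `n` while moving each coordinate by less than `1`.
-/

open Finset

section Rounding

variable {ι : Type*} [Fintype ι]

lemma le_sum_floor_add_card_filter_floor_lt {x : ι → ℝ} {n : ℕ} (hx : ∀ i, 0 ≤ x i)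
    (hsum : ∑ i, x i = n) :
    n ≤ ∑ i, ⌊x i⌋₊ + #{i | (⌊x i⌋₊ : ℝ) < x i} := by
  set T : Finset ι := {i | (⌊x i⌋₊ : ℝ) < x i}
  have hfract : ∑ i, (x i - ⌊x i⌋₊) = ∑ i ∈ T, (x i - ⌊x i⌋₊) := by
    refine (sum_subset (subset_univ T) fun i _ hiT => ?_).symm
    simp only [T, mem_filter, mem_univ, true_and, not_lt] at hiT
    linarith [Nat.floor_le (hx i)]
  have : (n : ℝ) ≤ ∑ i, (⌊x i⌋₊ : ℝ) + #T := by
    calc (n : ℝ) = ∑ i, (⌊x i⌋₊ : ℝ) + ∑ i ∈ T, (x i - ⌊x i⌋₊) := by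
          rw [← hfract, sum_sub_distrib, hsum]; ring
      _ ≤ ∑ i, (⌊x i⌋₊ : ℝ) + ∑ i ∈ T, (1 : ℝ) := by
          gcongr with i; linarith [Nat.lt_floor_add_one (x i)]
      _ = ∑ i, (⌊x i⌋₊ : ℝ) + #T := by simp
  exact_mod_cast this

lemma sum_floor_le_of_sum_eq {x : ι → ℝ} {n : ℕ} (hx : ∀ i, 0 ≤ x i) (hsum : ∑ i, x i = n) :
    ∑ i, ⌊x i⌋₊ ≤ n := by
  have : ∑ i, (⌊x i⌋₊ : ℝ) ≤ n := hsum ▸ sum_le_sum fun i _ => Nat.floor_le (hx i)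
  exact_mod_cast this

theorem exists_nat_round_of_sum_eq [DecidableEq ι] {x : ι → ℝ} {n : ℕ} (hx : ∀ i, 0 ≤ x i)
    (hsum : ∑ i, x i = n) :
    ∃ s : ι → ℕ, ∑ i, s i = n ∧ ∀ i, |(s i : ℝ) - x i| < 1 := by
  obtain ⟨S, hST, hS⟩ := exists_subset_card_eq <|
    tsub_le_iff_left.mpr (le_sum_floor_add_card_filter_floor_lt hx hsum)
  refine ⟨fun i => ⌊x i⌋₊ + if i ∈ S then 1 else 0, ?_, fun i => ?_⟩
  · rw [sum_add_distrib, sum_boole, filter_mem_eq_inter, univ_inter, hS]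
    exact Nat.add_sub_cancel' (sum_floor_le_of_sum_eq hx hsum)
  · have hlt := Nat.lt_floor_add_one (x i)
    rw [abs_lt]
    by_cases hiS : i ∈ S
    · have := (mem_filter.mp (hST hiS)).2
      simp only [hiS, if_true]; push_cast
      constructor <;> linarith
    · simp only [hiS, if_false]; push_cast
      constructor <;> linarith [Nat.floor_le (hx i)]

end Rounding

/-- Rounding a probability vector: for `α ∈ ℝ^m` non-negative with `∑ αᵢ = 1` and any `n ≥ 1`,
there is `s ∈ ℕ^m` with `∑ sᵢ = n` and `|sᵢ/n − αᵢ| < 1/n` for every `i`. -/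
theorem stmt0 (m : ℕ) (α : Fin m → ℝ) (hα : ∀ i, 0 ≤ α i)
    (hsum : ∑ i, α i = 1) (n : ℕ) (hn : 1 ≤ n) :
    ∃ s : Fin m → ℕ, (∑ i, s i) = n ∧
      ∀ i, |(s i : ℝ) / n - α i| < 1 / n := by
  have hn_pos : (0 : ℝ) < n := by exact_mod_cast hn
  obtain ⟨s, hs, hround⟩ := exists_nat_round_of_sum_eq (x := fun i => n * α i)
    (fun i => mul_nonneg n.cast_nonneg (hα i)) (by rw [← mul_sum, hsum, mul_one])
  refine ⟨s, hs, fun i => ?_⟩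
  have hdiv : (s i : ℝ) / n - α i = ((s i : ℝ) - n * α i) / n := by field_simp
  rw [hdiv, abs_div, abs_of_pos hn_pos]
  exact div_lt_div_of_pos_right (hround i) hn_pos
end

section
/- Let s ∈ ℝ_{≥0}^m and t ∈ ℝ_{≥0}^n with ∑_j s_j = ∑_i t_i. Then there exists a matrix X ∈ ℝ_{≥0}^{m×n} with row sums s (i.e. ∑_j X_{ij} = s_i for all i), column sums t (i.e. ∑_i X_{ij} = t_j for all j), and diagonal entries X_{ii} = min(s_i, t_i) for every i ≤ min(m,n). -/
/-- Transportation-plan existence: given non-negative vectors `s ∈ ℝ^m`, `t ∈ ℝ^n` of equal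
total mass, there is a non-negative `m × n` matrix `X` with row sums `s`, column sums `t`,
and diagonal entries `X_{ii} = min(sᵢ, tᵢ)` for every `i < min(m, n)`. -/
theorem stmt1 (m n : ℕ) (s : Fin m → ℝ) (t : Fin n → ℝ)
    (hs : ∀ i, 0 ≤ s i) (ht : ∀ j, 0 ≤ t j)
    (h : ∑ i, s i = ∑ j, t j) :
    ∃ X : Fin m → Fin n → ℝ,
      (∀ i j, 0 ≤ X i j) ∧
      (∀ i, ∑ j, X i j = s i) ∧
      (∀ j, ∑ i, X i j = t j) ∧
      (∀ (k : ℕ) (hk1 : k < m) (hk2 : k < n),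
        X ⟨k, hk1⟩ ⟨k, hk2⟩ = min (s ⟨k, hk1⟩) (t ⟨k, hk2⟩)) := by
  classical
  set M : Fin m → Fin n → ℝ :=
    fun i j => if (i : ℕ) = (j : ℕ) then min (s i) (t j) else 0 with hM
  have hMnonneg : ∀ i j, 0 ≤ M i j := by
    intro i j
    simp only [hM]
    split
    · exact le_min (hs i) (ht j)
    · exact le_refl 0
  -- row sum of M equals min when the diagonal index exists
  have hrowM : ∀ (i : Fin m) (j : Fin n), (i : ℕ) = (j : ℕ) →
      ∑ j', M i j' = min (s i) (t j) := by
    intro i j hij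
    rw [Finset.sum_eq_single j]
    · simp [hM, hij]
    · intro b _ hb
      simp only [hM, hij]
      rw [if_neg]
      intro hc
      exact hb (Fin.ext hc.symm)
    · intro hj; exact absurd (Finset.mem_univ j) hj
  have hcolM : ∀ (i : Fin m) (j : Fin n), (i : ℕ) = (j : ℕ) →
      ∑ i', M i' j = min (s i) (t j) := by
    intro i j hij
    rw [Finset.sum_eq_single i]
    · simp [hM, hij]
    · intro b _ hb
      simp only [hM]
      rw [if_neg]
      intro hc
      exact hb (Fin.ext (hc.trans hij.symm))
    · intro hi; exact absurd (Finset.mem_univ i) hi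
  have hrow_le : ∀ i : Fin m, ∑ j, M i j ≤ s i := by
    intro i
    by_cases hi : (i : ℕ) < n
    · rw [hrowM i ⟨i, hi⟩ rfl]; exact min_le_left _ _
    · have : ∀ j : Fin n, M i j = 0 := by
        intro j
        simp only [hM]
        rw [if_neg]
        intro hc
        exact hi (hc ▸ j.isLt)
      simp [Finset.sum_congr rfl fun j _ => this j]
      exact hs i
  have hcol_le : ∀ j : Fin n, ∑ i, M i j ≤ t j := by
    intro j
    by_cases hj : (j : ℕ) < m
    · rw [hcolM ⟨j, hj⟩ j rfl]; exact min_le_right _ _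
    · have : ∀ i : Fin m, M i j = 0 := by
        intro i
        simp only [hM]
        rw [if_neg]
        intro hc
        exact hj (hc ▸ i.isLt)
      simp [Finset.sum_congr rfl fun i _ => this i]
      exact ht j
  set s' : Fin m → ℝ := fun i => s i - ∑ j, M i j with hs'
  set t' : Fin n → ℝ := fun j => t j - ∑ i, M i j with ht'
  have hs'nonneg : ∀ i, 0 ≤ s' i := fun i => sub_nonneg.2 (hrow_le i)
  have ht'nonneg : ∀ j, 0 ≤ t' j := fun j => sub_nonneg.2 (hcol_le j)
  set T : ℝ := ∑ i, s' i with hT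
  have hTt : ∑ j, t' j = T := by
    simp only [hT, hs', ht', Finset.sum_sub_distrib]
    rw [← h, Finset.sum_comm]
  have hTnonneg : 0 ≤ T := Finset.sum_nonneg fun i _ => hs'nonneg i
  -- key: diagonal residual product vanishes
  have hdiag0 : ∀ (i : Fin m) (j : Fin n), (i : ℕ) = (j : ℕ) → s' i * t' j = 0 := by
    intro i j hij
    rcases min_cases (s i) (t j) with ⟨hmin, _⟩ | ⟨hmin, _⟩
    · have : s' i = 0 := by simp [hs', hrowM i j hij, hmin]
      simp [this]
    · have : t' j = 0 := by simp [ht', hcolM i j hij, hmin]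
      simp [this]
  refine ⟨fun i j => M i j + (if T = 0 then 0 else s' i * t' j / T), ?_, ?_, ?_, ?_⟩
  · intro i j
    have : 0 ≤ (if T = 0 then 0 else s' i * t' j / T) := by
      split
      · exact le_refl 0
      · exact div_nonneg (mul_nonneg (hs'nonneg i) (ht'nonneg j)) hTnonneg
    exact add_nonneg (hMnonneg i j) this
  · intro i
    rw [Finset.sum_add_distrib]
    by_cases hT0 : T = 0
    · have hsi' : s' i = 0 :=
        (Finset.sum_eq_zero_iff_of_nonneg fun i _ => hs'nonneg i).1 hT0 i (Finset.mem_univ i)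
      have : s i = ∑ j, M i j := by
        have := hsi'
        simp only [hs'] at this
        linarith
      simp [hT0, ← this]
    · simp only [if_neg hT0]
      rw [← Finset.sum_div, ← Finset.mul_sum, hTt, mul_div_assoc, div_self hT0, mul_one]
      simp only [hs']
      ring
  · intro j
    rw [Finset.sum_add_distrib]
    by_cases hT0 : T = 0
    · have hTt0 : ∑ j', t' j' = 0 := by rw [hTt, hT0]
      have htj' : t' j = 0 :=
        (Finset.sum_eq_zero_iff_of_nonneg fun j _ => ht'nonneg j).1 hTt0 j (Finset.mem_univ j)
      have : t j = ∑ i, M i j := by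
        simp only [ht'] at htj'
        linarith
      simp [hT0, ← this]
    · simp only [if_neg hT0]
      rw [← Finset.sum_div]
      have : ∑ i, s' i * t' j = T * t' j := by rw [← Finset.sum_mul, ← hT]
      rw [this, mul_comm, mul_div_assoc, div_self hT0, mul_one]
      simp only [ht']
      ring
  · intro k hk1 hk2
    have hij : ((⟨k, hk1⟩ : Fin m) : ℕ) = ((⟨k, hk2⟩ : Fin n) : ℕ) := rfl
    have h0 := hdiag0 ⟨k, hk1⟩ ⟨k, hk2⟩ hij
    have hMd : M ⟨k, hk1⟩ ⟨k, hk2⟩ = min (s ⟨k, hk1⟩) (t ⟨k, hk2⟩) := by simp [hM]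
    show M ⟨k, hk1⟩ ⟨k, hk2⟩ + (if T = 0 then 0 else s' ⟨k, hk1⟩ * t' ⟨k, hk2⟩ / T)
        = min (s ⟨k, hk1⟩) (t ⟨k, hk2⟩)
    rw [hMd]
    split
    · ring
    · rw [h0]; ring
end

section
/- Let U, W be graphons and S : L²[0,1] → L²[0,1] a bounded operator with S 1 = 1 and S* 1 = 1. For the path P_ℓ of length ℓ, |t(P_ℓ, U) − t(P_ℓ, W)| ≤ ℓ · sup_{f,g : [0,1] → [0,1]} |⟨f, (T_U ∘ S − S ∘ T_W) g⟩|, where t(P_ℓ, U) = ⟨1, T_U^ℓ 1⟩. -/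
/-!
Since `S 1 = 1` and `S* 1 = 1`, the difference of path densities is
`⟪1, T_Uˡ S 1⟫ - ⟪1, S T_Wˡ 1⟫`. Moving one factor `T_U` across the inner product (it is
self-adjoint because `U` is symmetric) gives

`⟪f, T_Uⁿ⁺¹ S g⟫ - ⟪f, S T_Wⁿ⁺¹ g⟫`
  `= (⟪T_U f, T_Uⁿ S g⟫ - ⟪T_U f, S T_Wⁿ g⟫) + ⟪f, (T_U S - S T_W) T_Wⁿ g⟫`.

Graphon operators preserve `[0,1]`-valued functions, so the last term is one of the inner products
in the supremum, and the first is handled by induction on `n`.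
-/

open MeasureTheory
open scoped RealInnerProductSpace

section Telescoping

variable {E : Type*} [NormedAddCommGroup E] [InnerProductSpace ℝ E]

theorem abs_inner_pow_comp_sub_inner_comp_pow_le {A T S : E →L[ℝ] E} {B : Set E}
    (hA : (A : E →ₗ[ℝ] E).IsSymmetric) (hAB : Set.MapsTo A B B) (hTB : Set.MapsTo T B B)
    {s : ℝ} (hs : ∀ f ∈ B, ∀ g ∈ B, |⟪f, (A ∘L S - S ∘L T) g⟫| ≤ s) (n : ℕ) {f g : E}
    (hf : f ∈ B) (hg : g ∈ B) :
    |⟪f, (A ^ n) (S g)⟫ - ⟪f, S ((T ^ n) g)⟫| ≤ n * s := by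
  induction n generalizing f with
  | zero => simp
  | succ n ih =>
    have hTn : (T ^ n) g ∈ B := by
      rw [FunLike.coe_pow_eq_iterate]
      exact hTB.iterate n hg
    have split : ⟪f, (A ^ (n + 1)) (S g)⟫ - ⟪f, S ((T ^ (n + 1)) g)⟫ =
        (⟪A f, (A ^ n) (S g)⟫ - ⟪A f, S ((T ^ n) g)⟫) +
          ⟪f, (A ∘L S - S ∘L T) ((T ^ n) g)⟫ := by
      have hsymm := hA f
      simp only [ContinuousLinearMap.coe_coe] at hsymm
      simp only [FunLike.coe_pow_eq_iterate, Function.iterate_succ_apply', sub_apply,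
        ContinuousLinearMap.comp_apply, inner_sub_right, hsymm]
      ring
    calc |⟪f, (A ^ (n + 1)) (S g)⟫ - ⟪f, S ((T ^ (n + 1)) g)⟫|
        ≤ |⟪A f, (A ^ n) (S g)⟫ - ⟪A f, S ((T ^ n) g)⟫| +
            |⟪f, (A ∘L S - S ∘L T) ((T ^ n) g)⟫| := split ▸ abs_add_le _ _
      _ ≤ n * s + s := add_le_add (ih (hAB hf)) (hs f hf _ hTn)
      _ = (n + 1 : ℕ) * s := by push_cast; ring

end Telescoping

section IntegralOperator

variable {α : Type*} [MeasurableSpace α] {μ : Measure α} {K : α → α → ℝ}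

theorem isSymmetric_of_symmetric_kernel [IsFiniteMeasure μ] {C : ℝ}
    (hKm : Measurable (Function.uncurry K)) (hKC : ∀ x y, |K x y| ≤ C)
    (hKs : ∀ x y, K x y = K y x) {T : Lp ℝ 2 μ →L[ℝ] Lp ℝ 2 μ}
    (hT : ∀ f : Lp ℝ 2 μ, ⇑(T f) =ᵐ[μ] fun x => ∫ y, K x y * f y ∂μ) :
    (T : Lp ℝ 2 μ →ₗ[ℝ] Lp ℝ 2 μ).IsSymmetric := by
  intro f g
  simp only [ContinuousLinearMap.coe_coe]
  have hf : Integrable f μ := (Lp.memLp f).integrable (by norm_num)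
  have hg : Integrable g μ := (Lp.memLp g).integrable (by norm_num)
  have hint : Integrable (Function.uncurry fun x y => f x * (K x y * g y)) (μ.prod μ) := by
    refine ((hf.abs.mul_prod hg.abs).const_mul C).mono'
      ((Lp.aestronglyMeasurable f).comp_fst.mul
        (hKm.aestronglyMeasurable.mul (Lp.aestronglyMeasurable g).comp_snd)) ?_
    refine ae_of_all _ fun z => ?_
    simp only [Function.uncurry, Real.norm_eq_abs, abs_mul]
    calc |f z.1| * (|K z.1 z.2| * |g z.2|) = |K z.1 z.2| * (|f z.1| * |g z.2|) := by ring
      _ ≤ C * (|f z.1| * |g z.2|) := by gcongr; exact hKC _ _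
  have hTg : ⟪f, T g⟫ = ∫ x, ∫ y, f x * (K x y * g y) ∂μ ∂μ := by
    rw [L2.inner_def]
    refine integral_congr_ae ?_
    filter_upwards [hT g] with x hx
    rw [real_inner_eq_re_inner, RCLike.inner_apply, RCLike.conj_to_real, hx,
      RCLike.re_to_real, mul_comm, ← integral_const_mul]
  have hTf : ⟪T f, g⟫ = ∫ y, ∫ x, f x * (K x y * g y) ∂μ ∂μ := by
    rw [L2.inner_def]
    refine integral_congr_ae ?_
    filter_upwards [hT f] with y hy
    rw [real_inner_eq_re_inner, RCLike.inner_apply, RCLike.conj_to_real, hy,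
      RCLike.re_to_real, ← integral_const_mul]
    congr 1 with x
    rw [hKs y x]
    ring
  rw [hTf, hTg, integral_integral_swap hint]

theorem mapsTo_ae_mem_Icc_of_kernel [IsProbabilityMeasure μ]
    (hK01 : ∀ x y, K x y ∈ Set.Icc (0 : ℝ) 1) {T : Lp ℝ 2 μ →L[ℝ] Lp ℝ 2 μ}
    (hT : ∀ f : Lp ℝ 2 μ, ⇑(T f) =ᵐ[μ] fun x => ∫ y, K x y * f y ∂μ) :
    Set.MapsTo T {f | ∀ᵐ x ∂μ, f x ∈ Set.Icc (0 : ℝ) 1}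
      {f | ∀ᵐ x ∂μ, f x ∈ Set.Icc (0 : ℝ) 1} := by
  intro f (hf : ∀ᵐ x ∂μ, f x ∈ Set.Icc (0 : ℝ) 1)
  filter_upwards [hT f] with x hx
  rw [hx]
  constructor
  · refine integral_nonneg_of_ae ?_
    filter_upwards [hf] with y hy
    exact mul_nonneg (hK01 x y).1 hy.1
  · calc ∫ y, K x y * f y ∂μ ≤ ∫ _, (1 : ℝ) ∂μ := by
          refine integral_mono_of_nonneg ?_ (integrable_const 1) ?_
          · filter_upwards [hf] with y hy
            exact mul_nonneg (hK01 x y).1 hy.1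
          · filter_upwards [hf] with y hy
            exact mul_le_one₀ (hK01 x y).2 hy.1 hy.2
      _ = 1 := by simp

theorem MeasureTheory.Lp.norm_le_one_of_ae_mem_Icc [IsProbabilityMeasure μ] {f : Lp ℝ 2 μ}
    (hf : ∀ᵐ x ∂μ, f x ∈ Set.Icc (0 : ℝ) 1) : ‖f‖ ≤ 1 := by
  have h := Lp.norm_le_of_ae_bound (C := 1) zero_le_one <| by
    filter_upwards [hf] with x hx
    rw [Real.norm_eq_abs, abs_le]
    exact ⟨by linarith [hx.1], hx.2⟩
  simpa [measureUnivNNReal] using h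

end IntegralOperator

noncomputable def oneL2 : Lp ℝ 2 (volume : Measure unitInterval) :=
  indicatorConstLp 2 MeasurableSet.univ (measure_ne_top _ _) (1 : ℝ)

def box : Type :=
  {f : Lp ℝ 2 (volume : Measure unitInterval) //
    ∀ᵐ x ∂(volume : Measure unitInterval), f x ∈ Set.Icc (0 : ℝ) 1}

theorem oneL2_apply (x : unitInterval) : oneL2 x = 1 := by
  simp only [oneL2, indicatorConstLp_univ, Lp.const_val, AEEqFun.coeFn_const_eq]

theorem oneL2_ae_mem_Icc :
    ∀ᵐ x ∂(volume : Measure unitInterval), oneL2 x ∈ Set.Icc (0 : ℝ) 1 :=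
  ae_of_all _ fun x => by simp [oneL2_apply]

theorem bddAbove_range_abs_inner_box
    (D : Lp ℝ 2 (volume : Measure unitInterval) →L[ℝ] Lp ℝ 2 (volume : Measure unitInterval)) :
    BddAbove (Set.range fun fg : box × box => |⟪fg.1.1, D fg.2.1⟫|) := by
  refine ⟨‖D‖, ?_⟩
  rintro _ ⟨⟨⟨f, hf⟩, ⟨g, hg⟩⟩, rfl⟩
  calc |⟪f, D g⟫| ≤ ‖f‖ * (‖D‖ * ‖g‖) :=
        (abs_real_inner_le_norm _ _).trans (by gcongr; exact D.le_opNorm g)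
    _ ≤ 1 * (‖D‖ * 1) := by
        gcongr
        exacts [Lp.norm_le_one_of_ae_mem_Icc hf, Lp.norm_le_one_of_ae_mem_Icc hg]
    _ = ‖D‖ := by ring

theorem stmt6_general (U W : unitInterval → unitInterval → ℝ)
    (hUmeas : Measurable (Function.uncurry U))
    (hUsymm : ∀ x y, U x y = U y x)
    (hU01 : ∀ x y, U x y ∈ Set.Icc (0 : ℝ) 1) (hW01 : ∀ x y, W x y ∈ Set.Icc (0 : ℝ) 1)
    (TU TW S : Lp ℝ 2 (volume : Measure unitInterval) →L[ℝ]
      Lp ℝ 2 (volume : Measure unitInterval))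
    (hTU : ∀ f : Lp ℝ 2 (volume : Measure unitInterval),
      ⇑(TU f) =ᵐ[volume] fun x => ∫ y, U x y * f y)
    (hTW : ∀ f : Lp ℝ 2 (volume : Measure unitInterval),
      ⇑(TW f) =ᵐ[volume] fun x => ∫ y, W x y * f y)
    (hS1 : S oneL2 = oneL2)
    (hSadj1 : ContinuousLinearMap.adjoint S oneL2 = oneL2)
    (ℓ : ℕ) :
    |(inner ℝ oneL2 ((TU ^ ℓ) oneL2) : ℝ) - (inner ℝ oneL2 ((TW ^ ℓ) oneL2) : ℝ)| ≤
      (ℓ : ℝ) * ⨆ fg : box × box,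
        |(inner ℝ (fg.1.1) ((TU ∘L S - S ∘L TW) fg.2.1) : ℝ)| := by
  have hU_abs_le : ∀ x y, |U x y| ≤ 1 := fun x y =>
    abs_le.2 ⟨by linarith [(hU01 x y).1], (hU01 x y).2⟩
  have key := abs_inner_pow_comp_sub_inner_comp_pow_le
    (isSymmetric_of_symmetric_kernel hUmeas hU_abs_le hUsymm hTU)
    (mapsTo_ae_mem_Icc_of_kernel hU01 hTU) (mapsTo_ae_mem_Icc_of_kernel hW01 hTW)
    (fun f hf g hg => le_ciSup (bddAbove_range_abs_inner_box (TU ∘L S - S ∘L TW))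
      (⟨⟨f, hf⟩, ⟨g, hg⟩⟩ : box × box))
    ℓ oneL2_ae_mem_Icc oneL2_ae_mem_Icc
  rwa [hS1, ← ContinuousLinearMap.adjoint_inner_left S, hSadj1] at key

/-- Counting lemma for paths: if `U, W` are graphons with integral operators `T_U, T_W` and
`S` is a bounded operator on `L²[0,1]` with `S1 = 1` and `S*1 = 1`, then for the path `P_ℓ`
of length `ℓ`,
`|t(P_ℓ,U) − t(P_ℓ,W)| ≤ ℓ · sup_{f,g : [0,1]→[0,1]} |⟨f, (T_U∘S − S∘T_W) g⟩|`,
where `t(P_ℓ,U) = ⟨1, T_U^ℓ 1⟩`. -/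
theorem stmt6 (U W : unitInterval → unitInterval → ℝ)
    (hUmeas : Measurable (Function.uncurry U)) (hWmeas : Measurable (Function.uncurry W))
    (hUsymm : ∀ x y, U x y = U y x) (hWsymm : ∀ x y, W x y = W y x)
    (hU01 : ∀ x y, U x y ∈ Set.Icc (0 : ℝ) 1) (hW01 : ∀ x y, W x y ∈ Set.Icc (0 : ℝ) 1)
    (TU TW S : Lp ℝ 2 (volume : Measure unitInterval) →L[ℝ]
      Lp ℝ 2 (volume : Measure unitInterval))
    (hTU : ∀ f : Lp ℝ 2 (volume : Measure unitInterval),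
      ⇑(TU f) =ᵐ[volume] fun x => ∫ y, U x y * f y)
    (hTW : ∀ f : Lp ℝ 2 (volume : Measure unitInterval),
      ⇑(TW f) =ᵐ[volume] fun x => ∫ y, W x y * f y)
    (hS1 : S oneL2 = oneL2)
    (hSadj1 : ContinuousLinearMap.adjoint S oneL2 = oneL2)
    (ℓ : ℕ) :
    |(inner ℝ oneL2 ((TU ^ ℓ) oneL2) : ℝ) - (inner ℝ oneL2 ((TW ^ ℓ) oneL2) : ℝ)| ≤
      (ℓ : ℝ) * ⨆ fg : box × box,
        |(inner ℝ (fg.1.1) ((TU ∘L S - S ∘L TW) fg.2.1) : ℝ)| :=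
  stmt6_general U W hUmeas hUsymm hU01 hW01 TU TW S hTU hTW hS1 hSadj1 ℓ
end

section
/- Let U, W be graphons and S : L²[0,1] → L²[0,1] an operator with S 1 = 1 and S* 1 = 1. Then for the path P_ℓ of length ℓ, |t(P_ℓ, U) − t(P_ℓ, W)| ≤ ℓ · ‖T_U ∘ S − S ∘ T_W‖_{2→2}. -/
/-!
Since `S 1 = 1` and `S* 1 = 1`, the difference of the two path densities is
`⟨1, (T_U^ℓ S - S T_W^ℓ) 1⟩`. Telescoping bounds `‖T_U^ℓ S - S T_W^ℓ‖` by
`ℓ ‖T_U S - S T_W‖` as soon as `‖T_U‖, ‖T_W‖ ≤ 1`, and a kernel bounded by `1` on a probability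
space gives a contraction of `L²`.
-/

open MeasureTheory

theorem norm_oneL2 : ‖oneL2‖ = 1 := by
  rw [oneL2, norm_indicatorConstLp (by norm_num) (by norm_num)]
  simp

theorem MeasureTheory.L2.integral_norm_le_norm {α E : Type*} [MeasurableSpace α] {μ : Measure α}
    [IsProbabilityMeasure μ] [NormedAddCommGroup E] (f : Lp E 2 μ) :
    ∫ x, ‖f x‖ ∂μ ≤ ‖f‖ := by
  rw [integral_norm_eq_lintegral_enorm (Lp.aestronglyMeasurable f),
    ← eLpNorm_one_eq_lintegral_enorm, Lp.norm_def]
  exact ENNReal.toReal_mono (Lp.eLpNorm_ne_top f)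
    (eLpNorm_le_eLpNorm_of_exponent_le (by norm_num) (Lp.aestronglyMeasurable f))

-- The kernel bound gives `‖T f‖_∞ ≤ ‖f‖_1`, and on a probability space
-- `‖·‖_2 ≤ ‖·‖_∞` and `‖·‖_1 ≤ ‖·‖_2`.
theorem opNorm_le_one_of_abs_kernel_le_one {α : Type*} [MeasurableSpace α] {μ : Measure α}
    [IsProbabilityMeasure μ] (K : α → α → ℝ) (hK : ∀ x y, |K x y| ≤ 1)
    (T : Lp ℝ 2 μ →L[ℝ] Lp ℝ 2 μ) (hT : ∀ f, ⇑(T f) =ᵐ[μ] fun x => ∫ y, K x y * f y ∂μ) :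
    ‖T‖ ≤ 1 := by
  refine T.opNorm_le_bound zero_le_one fun f => ?_
  have hf : Integrable (fun y => ‖f y‖) μ := ((Lp.memLp f).integrable (by norm_num)).norm
  have hsup : ∀ᵐ x ∂μ, ‖T f x‖ ≤ ∫ y, ‖f y‖ ∂μ := by
    filter_upwards [hT f] with x hx
    rw [hx]
    refine norm_integral_le_of_norm_le hf (Filter.Eventually.of_forall fun y => ?_)
    simpa [abs_mul] using mul_le_of_le_one_left (abs_nonneg (f y)) (hK x y)
  calc ‖T f‖ ≤ ∫ y, ‖f y‖ ∂μ := by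
        simpa [measureUnivNNReal] using
          Lp.norm_le_of_ae_bound (integral_nonneg fun y => norm_nonneg _) hsup
    _ ≤ 1 * ‖f‖ := by rw [one_mul]; exact L2.integral_norm_le_norm f

section Telescoping

variable {𝕜 E : Type*} [NontriviallyNormedField 𝕜] [SeminormedAddCommGroup E]
  [NormedSpace 𝕜 E]

theorem ContinuousLinearMap.norm_pow_le_one {A : E →L[𝕜] E} (hA : ‖A‖ ≤ 1) (n : ℕ) :
    ‖A ^ n‖ ≤ 1 := by
  induction n with
  | zero => exact ContinuousLinearMap.norm_id_le
  | succ n ih =>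
    calc ‖A ^ (n + 1)‖ ≤ ‖A ^ n‖ * ‖A‖ := pow_succ A n ▸ norm_mul_le _ _
      _ ≤ 1 := mul_le_one₀ ih (norm_nonneg A) hA

-- `A^(n+1) S - S B^(n+1) = A^n (A S - S B) + (A^n S - S B^n) B`.
theorem ContinuousLinearMap.norm_pow_mul_sub_mul_pow_le {A B : E →L[𝕜] E} (hA : ‖A‖ ≤ 1)
    (hB : ‖B‖ ≤ 1) (S : E →L[𝕜] E) (n : ℕ) :
    ‖A ^ n * S - S * B ^ n‖ ≤ n * ‖A * S - S * B‖ := by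
  induction n with
  | zero => simp
  | succ n ih =>
    have htele : A ^ (n + 1) * S - S * B ^ (n + 1) =
        A ^ n * (A * S - S * B) + (A ^ n * S - S * B ^ n) * B := by
      simp only [pow_succ, mul_sub, sub_mul, mul_assoc]
      abel
    rw [htele]
    calc _ ≤ ‖A ^ n‖ * ‖A * S - S * B‖ + ‖A ^ n * S - S * B ^ n‖ * ‖B‖ :=
          (norm_add_le _ _).trans (add_le_add (norm_mul_le _ _) (norm_mul_le _ _))
      _ ≤ 1 * ‖A * S - S * B‖ + (n * ‖A * S - S * B‖) * 1 := by
          gcongr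
          exact norm_pow_le_one hA n
      _ = (n + 1 : ℕ) * ‖A * S - S * B‖ := by push_cast; ring

end Telescoping

theorem inner_sub_inner_eq_inner_mul_sub_mul {F : Type*} [NormedAddCommGroup F]
    [InnerProductSpace ℝ F] [CompleteSpace F] {S : F →L[ℝ] F} {u : F} (hS : S u = u)
    (hS' : ContinuousLinearMap.adjoint S u = u) (A B : F →L[ℝ] F) :
    inner ℝ u (A u) - inner ℝ u (B u) = inner ℝ u ((A * S - S * B) u) := by
  rw [sub_apply, inner_sub_right, mul_apply_eq_comp, mul_apply_eq_comp, hS,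
    ← ContinuousLinearMap.adjoint_inner_left S, hS']

theorem stmt7_general (U W : unitInterval → unitInterval → ℝ)
    (hU01 : ∀ x y, U x y ∈ Set.Icc (0 : ℝ) 1) (hW01 : ∀ x y, W x y ∈ Set.Icc (0 : ℝ) 1)
    (TU TW S : Lp ℝ 2 (volume : Measure unitInterval) →L[ℝ]
      Lp ℝ 2 (volume : Measure unitInterval))
    (hTU : ∀ f : Lp ℝ 2 (volume : Measure unitInterval),
      ⇑(TU f) =ᵐ[volume] fun x => ∫ y, U x y * f y)
    (hTW : ∀ f : Lp ℝ 2 (volume : Measure unitInterval),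
      ⇑(TW f) =ᵐ[volume] fun x => ∫ y, W x y * f y)
    (hS1 : S oneL2 = oneL2)
    (hSadj1 : ContinuousLinearMap.adjoint S oneL2 = oneL2)
    (ℓ : ℕ) :
    |(inner ℝ oneL2 ((TU ^ ℓ) oneL2) : ℝ) - (inner ℝ oneL2 ((TW ^ ℓ) oneL2) : ℝ)| ≤
      (ℓ : ℝ) * ‖TU ∘L S - S ∘L TW‖ := by
  have graphon_abs_le_one {K : unitInterval → unitInterval → ℝ}
      (hK : ∀ x y, K x y ∈ Set.Icc (0 : ℝ) 1) (x y : unitInterval) : |K x y| ≤ 1 :=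
    abs_le.2 ⟨by linarith [(hK x y).1], (hK x y).2⟩
  have hTU1 := opNorm_le_one_of_abs_kernel_le_one U (graphon_abs_le_one hU01) TU hTU
  have hTW1 := opNorm_le_one_of_abs_kernel_le_one W (graphon_abs_le_one hW01) TW hTW
  rw [inner_sub_inner_eq_inner_mul_sub_mul hS1 hSadj1]
  calc _ ≤ ‖oneL2‖ * ‖(TU ^ ℓ * S - S * TW ^ ℓ) oneL2‖ := abs_real_inner_le_norm _ _
    _ ≤ ‖TU ^ ℓ * S - S * TW ^ ℓ‖ := by
        simpa [norm_oneL2] using (TU ^ ℓ * S - S * TW ^ ℓ).le_opNorm oneL2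
    _ ≤ ℓ * ‖TU ∘L S - S ∘L TW‖ :=
        ContinuousLinearMap.norm_pow_mul_sub_mul_pow_le hTU1 hTW1 S ℓ

/-- Counting lemma for paths, operator-norm form: if `U, W` are graphons with integral
operators `T_U, T_W` and `S` is an operator on `L²[0,1]` with `S1 = 1` and `S*1 = 1`, then
`|t(P_ℓ,U) − t(P_ℓ,W)| ≤ ℓ · ‖T_U∘S − S∘T_W‖_{2→2}` where `t(P_ℓ,U) = ⟨1, T_U^ℓ 1⟩`. -/
theorem stmt7 (U W : unitInterval → unitInterval → ℝ)
    (hUmeas : Measurable (Function.uncurry U)) (hWmeas : Measurable (Function.uncurry W))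
    (hUsymm : ∀ x y, U x y = U y x) (hWsymm : ∀ x y, W x y = W y x)
    (hU01 : ∀ x y, U x y ∈ Set.Icc (0 : ℝ) 1) (hW01 : ∀ x y, W x y ∈ Set.Icc (0 : ℝ) 1)
    (TU TW S : Lp ℝ 2 (volume : Measure unitInterval) →L[ℝ]
      Lp ℝ 2 (volume : Measure unitInterval))
    (hTU : ∀ f : Lp ℝ 2 (volume : Measure unitInterval),
      ⇑(TU f) =ᵐ[volume] fun x => ∫ y, U x y * f y)
    (hTW : ∀ f : Lp ℝ 2 (volume : Measure unitInterval),
      ⇑(TW f) =ᵐ[volume] fun x => ∫ y, W x y * f y)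
    (hS1 : S oneL2 = oneL2)
    (hSadj1 : ContinuousLinearMap.adjoint S oneL2 = oneL2)
    (ℓ : ℕ) :
    |(inner ℝ oneL2 ((TU ^ ℓ) oneL2) : ℝ) - (inner ℝ oneL2 ((TW ^ ℓ) oneL2) : ℝ)| ≤
      (ℓ : ℝ) * ‖TU ∘L S - S ∘L TW‖ :=
  stmt7_general U W hU01 hW01 TU TW S hTU hTW hS1 hSadj1 ℓ
end
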